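/- Let P = ⟨p₁, …, p_n⟩ and Q = ⟨q₁, …, q_n⟩ be sequences of n points in ℝ², let g > 0 with GED(P, Q) ≤ g, and set Δ = g/√n. For a shift b ∈ [0, Δ]², define X_b as the minimum of |Γ(M)| = 2(n − |M|) over all monotone matchings M between P and Q such that id_{Δ,b}(p_i) = id_{Δ,b}(q_j) for every (i, j) ∈ M. If b is chosen uniformly at random from [0, Δ]², then E[X_b] ≤ 6√n + g. -/

import Mathlib

open MeasureTheory

noncomputable section

/-- Points in the plane with the Euclidean distance. -/
abbrev Pt := EuclideanSpace ℝ (Fin 2)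

/-- The cell of the grid with side length `Δ`, shifted by `b`, containing the point `p`. -/
def gridId (Δ : ℝ) (b : Fin 2 → ℝ) (p : Pt) : ℤ × ℤ :=
  (⌊(p 0 + b 0) / Δ⌋, ⌊(p 1 + b 1) / Δ⌋)

/-- The box `[0, Δ]²` of possible shifts. -/
def shiftBox (Δ : ℝ) : Set (Fin 2 → ℝ) := Set.Icc 0 (fun _ => Δ)

/-- The uniform (normalized Lebesgue) measure on the box `[0, Δ]²`. -/
def unifShift (Δ : ℝ) : Measure (Fin 2 → ℝ) :=
  (volume (shiftBox Δ))⁻¹ • volume.restrict (shiftBox Δ)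

/-- A monotone matching between index sets `Fin n` and `Fin m`: a set of index pairs with
distinct first indices, distinct second indices, such that first indices and second indices
are ordered consistently. -/
structure MMatch (n m : ℕ) where
  pairs : Finset (Fin n × Fin m)
  inj1 : ∀ p ∈ pairs, ∀ q ∈ pairs, p.1 = q.1 → p = q
  inj2 : ∀ p ∈ pairs, ∀ q ∈ pairs, p.2 = q.2 → p = q
  mono : ∀ p ∈ pairs, ∀ q ∈ pairs, (p.1 < q.1 ↔ p.2 < q.2)

/-- The number of gap points `|Γ(M)|`: indices of both sequences left unmatched by `M`. -/
def gapCount {n m : ℕ} (M : MMatch n m) : ℕ :=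
  (n - M.pairs.card) + (m - M.pairs.card)
/-- The cost `δ(M)` (gap penalty 1) of a matching between the first `n` points of `P` and the
first `m` points of `Q`. -/
def cost (n m : ℕ) (P Q : ℕ → Pt) (M : MMatch n m) : ℝ :=
  (∑ p ∈ M.pairs, dist (P p.1) (Q p.2)) + (gapCount M : ℝ)

/-- The geometric edit distance between `⟨P 0, …, P (n-1)⟩` and `⟨Q 0, …, Q (m-1)⟩`:
the minimum cost over all monotone matchings. -/
def GED (n m : ℕ) (P Q : ℕ → Pt) : ℝ :=
  sInf {c | ∃ M : MMatch n m, c = cost n m P Q M}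

/-- `X b`: the minimum number of gap points `|Γ(M)| = 2(n − |M|)` over all monotone matchings
`M` between `P` and `Q` that only match points lying in a common cell of the grid with side
length `Δ` shifted by `b`. -/
def Xmin (n : ℕ) (Δ : ℝ) (P Q : ℕ → Pt) (b : Fin 2 → ℝ) : ℕ :=
  sInf {k | ∃ M : MMatch n n,
    (∀ p ∈ M.pairs, gridId Δ b (P p.1) = gridId Δ b (Q p.2)) ∧ k = gapCount M}

/-!
Fix a matching `M` realising `GED(P, Q) ≤ g`. For a shift `b`, discarding the pairs of `M`
whose points fall into different cells leaves a matching admissible for `X b`, at the price of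
two gap points per discarded pair. In each coordinate a pair at offset `d` is separated by at
most `2d / Δ` of the shifts, so a pair at distance `r` is separated with probability at most
`2√2 r / Δ ≤ 3 r / Δ`. Hence `E[X b] ≤ |Γ(M)| + 6 Σ r / Δ ≤ g + 6 g / Δ = g + 6√n`.
-/

open Set

lemma exists_int_mul_mem_Ioc_of_floor_div_ne {Δ u v : ℝ} (hΔ : 0 < Δ) (huv : u ≤ v)
    (h : ⌊u / Δ⌋ ≠ ⌊v / Δ⌋) : ∃ k : ℤ, u < k * Δ ∧ k * Δ ≤ v := by
  have hlt : ⌊u / Δ⌋ < ⌊v / Δ⌋ :=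
    (Int.floor_mono (div_le_div_of_nonneg_right huv hΔ.le)).lt_of_ne h
  exact ⟨⌊v / Δ⌋, (div_lt_iff₀ hΔ).mp (Int.floor_lt.mp hlt), (le_div_iff₀ hΔ).mp (Int.floor_le _)⟩

/-- For `x ≤ y ≤ x + Δ`, the shifts separating `x` and `y` are those moving one of the two grid
points following `x` into `(x, y]`; each such point accounts for an interval of length `y - x`. -/
lemma volume_floor_add_div_ne_le {Δ : ℝ} (hΔ : 0 < Δ) (x y : ℝ) :
    volume {t ∈ Icc 0 Δ | ⌊(x + t) / Δ⌋ ≠ ⌊(y + t) / Δ⌋} ≤ ENNReal.ofReal (2 * |x - y|) := by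
  wlog hxy : x ≤ y generalizing x y
  · simpa only [ne_comm, abs_sub_comm] using this y x (le_of_not_ge hxy)
  rw [abs_sub_comm, abs_of_nonneg (sub_nonneg.mpr hxy)]
  rcases lt_or_ge Δ (y - x) with hfar | hclose
  · calc _ ≤ volume (Icc 0 Δ) := measure_mono (sep_subset _ _)
      _ ≤ _ := by rw [Real.volume_Icc]; exact ENNReal.ofReal_le_ofReal (by linarith)
  set m := ⌊x / Δ⌋
  have hsub : {t ∈ Icc 0 Δ | ⌊(x + t) / Δ⌋ ≠ ⌊(y + t) / Δ⌋} ⊆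
      Ico ((m + 1) * Δ - y) ((m + 1) * Δ - x) ∪ Ico ((m + 2) * Δ - y) ((m + 2) * Δ - x) := by
    rintro t ⟨⟨ht0, htΔ⟩, hne⟩
    obtain ⟨k, hk₁, hk₂⟩ := exists_int_mul_mem_Ioc_of_floor_div_ne hΔ (by linarith) hne
    have hmk : m < k := Int.floor_lt.mpr ((div_lt_iff₀ hΔ).mpr (by linarith))
    have hkm : k - 2 ≤ m := Int.le_floor.mpr ((le_div_iff₀ hΔ).mpr (by push_cast; linarith))
    obtain rfl | rfl : k = m + 1 ∨ k = m + 2 := by omega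
    · left; push_cast at hk₁ hk₂; constructor <;> linarith
    · right; push_cast at hk₁ hk₂; constructor <;> linarith
  calc _ ≤ _ := measure_mono hsub
    _ ≤ _ := measure_union_le _ _
    _ = ENNReal.ofReal (2 * (y - x)) := by
      rw [Real.volume_Ico, Real.volume_Ico, ← ENNReal.ofReal_add (by linarith) (by linarith)]
      ring_nf

lemma measurable_gridId (Δ : ℝ) (p : Pt) : Measurable fun b => gridId Δ b p := by
  unfold gridId
  fun_prop

lemma measurableSet_gridId_ne (Δ : ℝ) (x y : Pt) :
    MeasurableSet {b | gridId Δ b x ≠ gridId Δ b y} :=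
  (measurableSet_eq_fun (measurable_gridId Δ x) (measurable_gridId Δ y)).compl

lemma shiftBox_eq_pi (Δ : ℝ) : shiftBox Δ = univ.pi fun _ => Icc 0 Δ :=
  (pi_univ_Icc _ _).symm

lemma volume_shiftBox (Δ : ℝ) :
    volume (shiftBox Δ) = ENNReal.ofReal Δ * ENNReal.ofReal Δ := by
  rw [shiftBox_eq_pi, volume_pi_pi, Fin.prod_univ_two, Real.volume_Icc, sub_zero]

lemma unifShift_apply (Δ : ℝ) (s : Set (Fin 2 → ℝ)) :
    unifShift Δ s = (volume (shiftBox Δ))⁻¹ * volume (s ∩ shiftBox Δ) := by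
  rw [unifShift, Measure.smul_apply, smul_eq_mul,
    Measure.restrict_apply' (show MeasurableSet (shiftBox Δ) from measurableSet_Icc)]

lemma unifShift_of_nonpos {Δ : ℝ} (hΔ : Δ ≤ 0) : unifShift Δ = 0 := by
  rw [unifShift, Measure.restrict_eq_zero.mpr, smul_zero]
  simp [volume_shiftBox, ENNReal.ofReal_of_nonpos hΔ]

lemma isProbabilityMeasure_unifShift {Δ : ℝ} (hΔ : 0 < Δ) :
    IsProbabilityMeasure (unifShift Δ) := by
  constructor
  rw [unifShift_apply, univ_inter, ENNReal.inv_mul_cancel] <;>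
    simp [volume_shiftBox, ENNReal.mul_eq_top, hΔ]

lemma volume_gridId_ne_inter_shiftBox_le {Δ : ℝ} (hΔ : 0 < Δ) (x y : Pt) :
    volume ({b | gridId Δ b x ≠ gridId Δ b y} ∩ shiftBox Δ)
      ≤ ENNReal.ofReal (2 * (|x 0 - y 0| + |x 1 - y 1|) * Δ) := by
  set S : Fin 2 → Set ℝ := fun i => {t ∈ Icc 0 Δ | ⌊(x i + t) / Δ⌋ ≠ ⌊(y i + t) / Δ⌋}
  have hsub : {b | gridId Δ b x ≠ gridId Δ b y} ∩ shiftBox Δ ⊆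
      univ.pi ![S 0, Icc 0 Δ] ∪ univ.pi ![Icc 0 Δ, S 1] := by
    rintro b ⟨hne, hb⟩
    rw [shiftBox_eq_pi, mem_univ_pi] at hb
    by_cases h0 : ⌊(x 0 + b 0) / Δ⌋ = ⌊(y 0 + b 0) / Δ⌋
    · have h1 : ⌊(x 1 + b 1) / Δ⌋ ≠ ⌊(y 1 + b 1) / Δ⌋ := fun h1 => hne (Prod.ext h0 h1)
      right
      simp [Fin.forall_fin_two, S, (hb 0).1, (hb 0).2, (hb 1).1, (hb 1).2, h1]
    · left
      simp [Fin.forall_fin_two, S, (hb 0).1, (hb 0).2, (hb 1).1, (hb 1).2, h0]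
  calc _ ≤ _ := measure_mono hsub
    _ ≤ _ := measure_union_le _ _
    _ ≤ ENNReal.ofReal (2 * |x 0 - y 0|) * ENNReal.ofReal Δ
          + ENNReal.ofReal Δ * ENNReal.ofReal (2 * |x 1 - y 1|) := by
      simp only [volume_pi_pi, Fin.prod_univ_two, Matrix.cons_val_zero, Matrix.cons_val_one,
        Real.volume_Icc, sub_zero]
      gcongr <;> exact volume_floor_add_div_ne_le hΔ _ _
    _ = _ := by
      rw [← ENNReal.ofReal_mul (by positivity), ← ENNReal.ofReal_mul hΔ.le,
        ← ENNReal.ofReal_add (by positivity) (by positivity)]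
      ring_nf

lemma two_mul_abs_sub_add_abs_sub_le_dist (x y : Pt) :
    2 * (|x 0 - y 0| + |x 1 - y 1|) ≤ 3 * dist x y := by
  have hsq : dist x y ^ 2 = |x 0 - y 0| ^ 2 + |x 1 - y 1| ^ 2 := by
    rw [EuclideanSpace.dist_eq, Real.sq_sqrt (by positivity), Fin.sum_univ_two, Real.dist_eq,
      Real.dist_eq]
  nlinarith [dist_nonneg (x := x) (y := y), sq_nonneg (|x 0 - y 0| - |x 1 - y 1|),
    abs_nonneg (x 0 - y 0), abs_nonneg (x 1 - y 1)]

lemma unifShift_real_gridId_ne_le {Δ : ℝ} (hΔ : 0 < Δ) (x y : Pt) :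
    (unifShift Δ).real {b | gridId Δ b x ≠ gridId Δ b y} ≤ 3 * dist x y / Δ := by
  rw [measureReal_def, unifShift_apply, volume_shiftBox]
  refine ENNReal.toReal_le_of_le_ofReal (by positivity) ?_
  calc _ ≤ (ENNReal.ofReal Δ * ENNReal.ofReal Δ)⁻¹
          * ENNReal.ofReal (2 * (|x 0 - y 0| + |x 1 - y 1|) * Δ) := by
        gcongr
        exact volume_gridId_ne_inter_shiftBox_le hΔ x y
    _ = ENNReal.ofReal (2 * (|x 0 - y 0| + |x 1 - y 1|) / Δ) := by
        rw [← ENNReal.ofReal_mul hΔ.le, ← ENNReal.ofReal_inv_of_pos (by positivity),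
          ← ENNReal.ofReal_mul (by positivity)]
        congr 1
        field_simp
    _ ≤ _ := by
        gcongr ENNReal.ofReal (?_ / _)
        exact two_mul_abs_sub_add_abs_sub_le_dist x y

namespace MMatch

variable {n m : ℕ}

instance : Finite (MMatch n m) :=
  Finite.of_injective pairs fun M N h => by cases M; cases N; congr

def filter (M : MMatch n m) (p : Fin n × Fin m → Prop) [DecidablePred p] : MMatch n m where
  pairs := M.pairs.filter p
  inj1 a ha b hb := M.inj1 a (Finset.mem_of_mem_filter a ha) b (Finset.mem_of_mem_filter b hb)
  inj2 a ha b hb := M.inj2 a (Finset.mem_of_mem_filter a ha) b (Finset.mem_of_mem_filter b hb)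
  mono a ha b hb := M.mono a (Finset.mem_of_mem_filter a ha) b (Finset.mem_of_mem_filter b hb)

lemma card_le_left (M : MMatch n m) : M.pairs.card ≤ n := by
  simpa using Finset.card_le_card_of_injOn Prod.fst (fun a _ => Finset.mem_univ a.1)
    fun a ha b hb => M.inj1 a ha b hb

lemma card_le_right (M : MMatch n m) : M.pairs.card ≤ m := by
  simpa using Finset.card_le_card_of_injOn Prod.snd (fun a _ => Finset.mem_univ a.2)
    fun a ha b hb => M.inj2 a ha b hb

lemma gapCount_filter (M : MMatch n m) (p : Fin n × Fin m → Prop) [DecidablePred p] :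
    gapCount (M.filter p) = gapCount M + 2 * (M.pairs.filter fun a => ¬ p a).card := by
  have hsplit := Finset.card_filter_add_card_filter_not (s := M.pairs) p
  have := M.card_le_left
  have := M.card_le_right
  simp only [gapCount, filter]
  omega

end MMatch

lemma exists_cost_eq_GED (n m : ℕ) (P Q : ℕ → Pt) :
    ∃ M : MMatch n m, cost n m P Q M = GED n m P Q := by
  have hfin : {c | ∃ M : MMatch n m, c = cost n m P Q M}.Finite :=
    (finite_range (cost n m P Q)).subset fun _ ⟨M, hM⟩ => ⟨M, hM.symm⟩
  have hne : {c | ∃ M : MMatch n m, c = cost n m P Q M}.Nonempty :=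
    ⟨_, ⟨∅, by simp, by simp, by simp⟩, rfl⟩
  obtain ⟨M, hM⟩ := hne.csInf_mem hfin
  exact ⟨M, hM.symm⟩

/-- Dropping from `M` the pairs separated by the grid leaves an admissible matching for `X b`. -/
lemma Xmin_le_gapCount_add {n : ℕ} (Δ : ℝ) (P Q : ℕ → Pt) (b : Fin 2 → ℝ) (M : MMatch n n) :
    Xmin n Δ P Q b ≤ gapCount M
      + 2 * (M.pairs.filter fun a => gridId Δ b (P a.1) ≠ gridId Δ b (Q a.2)).card := by
  rw [← MMatch.gapCount_filter]
  exact Nat.sInf_le ⟨M.filter _, fun a ha => (Finset.mem_filter.mp ha).2, rfl⟩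

lemma integral_Xmin_le {n : ℕ} {Δ : ℝ} (hΔ : 0 < Δ) (P Q : ℕ → Pt) (M : MMatch n n) :
    ∫ b, (Xmin n Δ P Q b : ℝ) ∂(unifShift Δ) ≤ gapCount M
      + 2 * ∑ a ∈ M.pairs, (unifShift Δ).real {b | gridId Δ b (P a.1) ≠ gridId Δ b (Q a.2)} := by
  have := isProbabilityMeasure_unifShift hΔ
  set bad : Fin n × Fin n → Set (Fin 2 → ℝ) :=
    fun a => {b | gridId Δ b (P a.1) ≠ gridId Δ b (Q a.2)}
  have hbad : ∀ a, MeasurableSet (bad a) := fun a => measurableSet_gridId_ne _ _ _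
  have hint : ∀ a ∈ M.pairs, Integrable ((bad a).indicator 1) (unifShift Δ) :=
    fun a _ => (integrable_const (1 : ℝ)).indicator (hbad a)
  calc ∫ b, (Xmin n Δ P Q b : ℝ) ∂(unifShift Δ)
      ≤ ∫ b, (gapCount M + 2 * ∑ a ∈ M.pairs, (bad a).indicator 1 b : ℝ) ∂(unifShift Δ) := by
        refine integral_mono_of_nonneg (ae_of_all _ fun b => Nat.cast_nonneg _)
          ((integrable_const _).add ((integrable_finsetSum _ hint).const_mul 2))
          (ae_of_all _ fun b => ?_)
        have hb := Xmin_le_gapCount_add Δ P Q b M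
        calc (Xmin n Δ P Q b : ℝ)
            ≤ gapCount M + 2 * ((M.pairs.filter
                fun a => gridId Δ b (P a.1) ≠ gridId Δ b (Q a.2)).card : ℝ) := by
              exact_mod_cast hb
          _ = _ := by
              rw [Finset.natCast_card_filter]
              simp [indicator_apply, bad]
    _ = _ := by
        rw [integral_add (integrable_const _) ((integrable_finsetSum _ hint).const_mul 2),
          integral_const, integral_const_mul, integral_finsetSum _ hint]
        simp [integral_indicator_one (hbad _), bad]

theorem expected_Xmin_le_general (n : ℕ) (P Q : ℕ → Pt) (g : ℝ)
    (hged : GED n n P Q ≤ g) (Δ : ℝ) (hΔ : Δ = g / Real.sqrt n) :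
    ∫ b, (Xmin n Δ P Q b : ℝ) ∂(unifShift Δ) ≤ 6 * Real.sqrt n + g := by
  obtain ⟨M, hM⟩ := exists_cost_eq_GED n n P Q
  have hcost : (∑ a ∈ M.pairs, dist (P a.1) (Q a.2)) + gapCount M ≤ g := by
    rw [← cost, hM]
    exact hged
  have hdist_nonneg : 0 ≤ ∑ a ∈ M.pairs, dist (P a.1) (Q a.2) :=
    Finset.sum_nonneg fun _ _ => dist_nonneg
  rcases le_or_gt Δ 0 with hΔ0 | hΔ0
  · rw [unifShift_of_nonpos hΔ0, integral_zero_measure]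
    linarith [(gapCount M).cast_nonneg (α := ℝ), Real.sqrt_nonneg n]
  have hg : g / Δ = Real.sqrt n := by
    rw [hΔ, div_div_cancel₀]
    rintro rfl
    simp [hΔ] at hΔ0
  calc _ ≤ _ := integral_Xmin_le hΔ0 P Q M
    _ ≤ gapCount M + 2 * ∑ a ∈ M.pairs, 3 * dist (P a.1) (Q a.2) / Δ := by
      gcongr with a
      exact unifShift_real_gridId_ne_le hΔ0 _ _
    _ = gapCount M + 6 * (∑ a ∈ M.pairs, dist (P a.1) (Q a.2)) / Δ := by
      rw [← Finset.sum_div, ← Finset.mul_sum]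
      ring
    _ ≤ g + 6 * g / Δ := by
      gcongr <;> linarith [(gapCount M).cast_nonneg (α := ℝ)]
    _ = 6 * Real.sqrt n + g := by
      rw [mul_div_assoc, hg]
      ring

/-- If `GED(P, Q) ≤ g` and `Δ = g / √n`, then for a uniformly random shift `b ∈ [0, Δ]²`,
the expected value of `X b` is at most `6√n + g`. -/
theorem expected_Xmin_le (n : ℕ) (P Q : ℕ → Pt) (g : ℝ) (hg : 0 < g)
    (hged : GED n n P Q ≤ g) (Δ : ℝ) (hΔ : Δ = g / Real.sqrt n) :
    ∫ b, (Xmin n Δ P Q b : ℝ) ∂(unifShift Δ) ≤ 6 * Real.sqrt n + g :=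
  expected_Xmin_le_general n P Q g hged Δ hΔ
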